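/- Let Z ∈ ℝ^{n×r} have rank r. If p ≥ μ(Z)·r·log(r/δ)/n for some δ ∈ (0,1), and Z̃ is formed by keeping each row of Z independently with probability p, then rank(Z̃) = r with probability at least 1 − δ. -/

import Mathlib

open MeasureTheory ProbabilityTheory

noncomputable def colSpace {ι : Type*} [Fintype ι] [DecidableEq ι] {r : ℕ}
    (M : Matrix ι (Fin r) ℝ) : Submodule ℝ (EuclideanSpace ℝ ι) :=
  Submodule.span ℝ (Set.range fun ℓ : Fin r => (WithLp.toLp 2 (fun i => M i ℓ) : EuclideanSpace ℝ ι))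

/-- The coherence `μ(M)` of a matrix. -/
noncomputable def coherence {ι : Type*} [Fintype ι] [DecidableEq ι] {r : ℕ}
    (M : Matrix ι (Fin r) ℝ) : ℝ :=
  ((Fintype.card ι : ℝ) / r) *
    ⨆ i : ι, ‖(Submodule.orthogonalProjection (colSpace M) (EuclideanSpace.single i 1) :
      EuclideanSpace ℝ ι)‖ ^ 2


-- reindexing lemma
private lemma card_mul_sum {α : Type*} [Fintype α] [DecidableEq α] (g : Finset α → ℝ) :
    ∑ s : Finset α, (s.card : ℝ) * g s = ∑ s : Finset α, ∑ i ∈ sᶜ, g (insert i s) := by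
  have h1 : ∀ s : Finset α, (s.card : ℝ) * g s = ∑ i ∈ s, g s := by
    intro s; rw [Finset.sum_const, nsmul_eq_mul]
  simp_rw [h1]
  have h2 : ∀ s : Finset α, sᶜ = Finset.univ.filter (fun i => i ∉ s) := by
    intro s; ext i; simp
  -- swap to pairs
  rw [show (∑ s : Finset α, ∑ i ∈ s, g s)
      = ∑ i : α, ∑ s ∈ Finset.univ.filter (fun s : Finset α => i ∈ s), g s by
    simp_rw [Finset.sum_filter]
    rw [Finset.sum_comm]
    congr 1; ext s
    rw [Finset.sum_ite_mem, Finset.univ_inter]]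
  rw [show (∑ s : Finset α, ∑ i ∈ sᶜ, g (insert i s))
      = ∑ i : α, ∑ s ∈ Finset.univ.filter (fun s : Finset α => i ∉ s), g (insert i s) by
    simp_rw [h2, Finset.sum_filter]
    rw [Finset.sum_comm]]
  congr 1; ext i
  refine Finset.sum_nbij' (fun s => s.erase i) (fun s => insert i s) ?_ ?_ ?_ ?_ ?_
  · intro s hs; simp only [Finset.mem_filter, Finset.mem_univ, true_and] at hs ⊢; simp
  · intro s hs; simp only [Finset.mem_filter, Finset.mem_univ, true_and] at hs ⊢; simp [hs]
  · intro s hs; simp at hs; exact Finset.insert_erase hs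
  · intro s hs; simp at hs; exact Finset.erase_insert hs
  · intro s hs; simp at hs; rw [Finset.insert_erase hs]

private lemma russo_gronwall {α : Type*} [Fintype α] [DecidableEq α]
    (f : Finset α → ℝ) (hf0 : ∀ s, 0 ≤ f s) {c : ℝ} (hc : 0 < c)
    (hkey : ∀ s : Finset α, f s / c ≤ ∑ i ∈ sᶜ, (f s - f (insert i s)))
    {p : ℝ} (hp0 : 0 ≤ p) (hp1 : p ≤ 1) :
    ∑ s : Finset α, p ^ s.card * (1 - p) ^ sᶜ.card * f s ≤ f ∅ * Real.exp (-(p / c)) := by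
  classical
  set F : ℝ → ℝ := fun t => ∑ s : Finset α, t ^ s.card * (1 - t) ^ sᶜ.card * f s with hF
  set D : ℝ → ℝ := fun t => ∑ s : Finset α, ∑ i ∈ sᶜ,
      t ^ s.card * (1 - t) ^ (sᶜ.card - 1) * (f (insert i s) - f s) with hD
  -- derivative of F
  have hderiv : ∀ t : ℝ, HasDerivAt F (D t) t := by
    intro t
    have h1 : HasDerivAt F
        (∑ s : Finset α, ((s.card : ℝ) * t ^ (s.card - 1) * (1 - t) ^ sᶜ.card
          - (sᶜ.card : ℝ) * t ^ s.card * (1 - t) ^ (sᶜ.card - 1)) * f s) t := by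
      apply HasDerivAt.fun_sum (A := fun s x => x ^ s.card * (1 - x) ^ sᶜ.card * f s)
      intro s _
      have ha : HasDerivAt (fun x : ℝ => x ^ s.card) ((s.card : ℝ) * t ^ (s.card - 1)) t :=
        hasDerivAt_pow _ _
      have hb0 : HasDerivAt (fun x : ℝ => 1 - x) (-1) t := by
        simpa using (hasDerivAt_id t).const_sub 1
      have hb : HasDerivAt (fun x : ℝ => (1 - x) ^ sᶜ.card)
          (((sᶜ.card : ℝ) * (1 - t) ^ (sᶜ.card - 1)) * (-1)) t :=
        (hasDerivAt_pow sᶜ.card (1 - t)).comp t hb0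
      have := (ha.fun_mul hb).mul_const (f s)
      exact this.congr_deriv (by ring)
    convert h1 using 1
    rw [hD]
    have e1 : ∑ s : Finset α, ∑ i ∈ sᶜ,
        t ^ s.card * (1 - t) ^ (sᶜ.card - 1) * f (insert i s)
        = ∑ s : Finset α, (s.card : ℝ) * (t ^ (s.card - 1) * (1 - t) ^ sᶜ.card * f s) := by
      rw [card_mul_sum (fun s => t ^ (s.card - 1) * (1 - t) ^ sᶜ.card * f s)]
      congr 1; ext s
      apply Finset.sum_congr rfl
      intro i hi
      have hins : i ∉ s := by simpa using hi
      rw [Finset.card_insert_of_notMem hins, Finset.compl_insert,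
        Finset.card_erase_of_mem (by simpa using hi)]
      simp
    have e2 : ∀ s : Finset α, ∑ i ∈ sᶜ,
        t ^ s.card * (1 - t) ^ (sᶜ.card - 1) * f s
        = (sᶜ.card : ℝ) * t ^ s.card * (1 - t) ^ (sᶜ.card - 1) * f s := by
      intro s; rw [Finset.sum_const, nsmul_eq_mul]; ring
    calc ∑ s : Finset α, ∑ i ∈ sᶜ, t ^ s.card * (1 - t) ^ (sᶜ.card - 1) * (f (insert i s) - f s)
        = ∑ s : Finset α, ((∑ i ∈ sᶜ, t ^ s.card * (1 - t) ^ (sᶜ.card - 1) * f (insert i s))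
            - ∑ i ∈ sᶜ, t ^ s.card * (1 - t) ^ (sᶜ.card - 1) * f s) := by
          apply Finset.sum_congr rfl; intro s _
          rw [← Finset.sum_sub_distrib]
          apply Finset.sum_congr rfl; intro i _; ring
      _ = _ := by
          rw [Finset.sum_sub_distrib, e1]
          simp_rw [e2]
          rw [← Finset.sum_sub_distrib]
          apply Finset.sum_congr rfl; intro s _; ring
  -- bound on D
  have hDbound : ∀ t ∈ Set.Icc (0:ℝ) 1, D t ≤ -(F t / c) := by
    intro t ht
    obtain ⟨ht0, ht1⟩ := ht
    have h1t : (0:ℝ) ≤ 1 - t := by linarith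
    rw [hD, hF]
    have step : ∀ s : Finset α, ∑ i ∈ sᶜ,
        t ^ s.card * (1 - t) ^ (sᶜ.card - 1) * (f (insert i s) - f s)
        ≤ -(t ^ s.card * (1 - t) ^ sᶜ.card * f s / c) := by
      intro s
      have w1 : (0:ℝ) ≤ t ^ s.card * (1 - t) ^ (sᶜ.card - 1) :=
        mul_nonneg (pow_nonneg ht0 _) (pow_nonneg h1t _)
      have hsum : ∑ i ∈ sᶜ, t ^ s.card * (1 - t) ^ (sᶜ.card - 1) * (f (insert i s) - f s)
          = t ^ s.card * (1 - t) ^ (sᶜ.card - 1) * ∑ i ∈ sᶜ, (f (insert i s) - f s) := by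
        rw [Finset.mul_sum]
      rw [hsum]
      have h2 : ∑ i ∈ sᶜ, (f (insert i s) - f s) ≤ -(f s / c) := by
        have := hkey s
        have : -(∑ i ∈ sᶜ, (f s - f (insert i s))) ≤ -(f s / c) := by linarith
        calc ∑ i ∈ sᶜ, (f (insert i s) - f s)
            = -(∑ i ∈ sᶜ, (f s - f (insert i s))) := by
              rw [← Finset.sum_neg_distrib]; apply Finset.sum_congr rfl; intro i _; ring
          _ ≤ -(f s / c) := this
      calc t ^ s.card * (1 - t) ^ (sᶜ.card - 1) * ∑ i ∈ sᶜ, (f (insert i s) - f s)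
          ≤ t ^ s.card * (1 - t) ^ (sᶜ.card - 1) * (-(f s / c)) :=
            mul_le_mul_of_nonneg_left h2 w1
        _ ≤ -(t ^ s.card * (1 - t) ^ sᶜ.card * f s / c) := by
            have hpow : (1 - t) ^ sᶜ.card ≤ (1 - t) ^ (sᶜ.card - 1) :=
              pow_le_pow_of_le_one h1t (by linarith) (Nat.sub_le _ _)
            have hfs := hf0 s
            have htn : (0:ℝ) ≤ t ^ s.card := pow_nonneg ht0 _
            rw [mul_neg, neg_le_neg_iff, mul_div_assoc]
            apply mul_le_mul_of_nonneg_right _ (div_nonneg hfs hc.le)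
            exact mul_le_mul_of_nonneg_left hpow htn
    calc ∑ s : Finset α, ∑ i ∈ sᶜ, t ^ s.card * (1 - t) ^ (sᶜ.card - 1) * (f (insert i s) - f s)
        ≤ ∑ s : Finset α, -(t ^ s.card * (1 - t) ^ sᶜ.card * f s / c) :=
          Finset.sum_le_sum (fun s _ => step s)
      _ = -((∑ s : Finset α, t ^ s.card * (1 - t) ^ sᶜ.card * f s) / c) := by
          simp only [← neg_div]
          rw [← Finset.sum_div, Finset.sum_neg_distrib, neg_div]
  -- Gronwall
  have hg : ∀ t : ℝ, HasDerivAt (fun t => F t * Real.exp (t / c))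
      (D t * Real.exp (t / c) + F t * (Real.exp (t / c) * (1 / c))) t := by
    intro t
    have h1 : HasDerivAt (fun t : ℝ => t / c) (1 / c) t := by
      simpa using (hasDerivAt_id t).div_const c
    exact (hderiv t).mul h1.exp
  have hdiffg : Differentiable ℝ (fun t => F t * Real.exp (t / c)) :=
    fun t => (hg t).differentiableAt
  have anti : AntitoneOn (fun t => F t * Real.exp (t / c)) (Set.Icc 0 1) := by
    apply antitoneOn_of_deriv_nonpos (convex_Icc 0 1)
      hdiffg.continuous.continuousOn hdiffg.differentiableOn
    intro x hx
    rw [interior_Icc] at hx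
    rw [(hg x).deriv]
    have hb := hDbound x ⟨hx.1.le, hx.2.le⟩
    have h1 : D x + F x / c ≤ 0 := by linarith
    have heq : D x * Real.exp (x / c) + F x * (Real.exp (x / c) * (1 / c))
        = (D x + F x / c) * Real.exp (x / c) := by ring
    rw [heq]
    exact mul_nonpos_iff.mpr (Or.inr ⟨h1, (Real.exp_pos _).le⟩)
  have hanti := anti (Set.mem_Icc.mpr ⟨le_refl 0, zero_le_one⟩) (Set.mem_Icc.mpr ⟨hp0, hp1⟩) hp0
  have hF0 : F 0 = f ∅ := by
    show (∑ s : Finset α, (0:ℝ) ^ s.card * (1 - 0) ^ sᶜ.card * f s) = f ∅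
    rw [Finset.sum_eq_single ∅]
    · simp
    · intro s _ hs
      have hcard : s.card ≠ 0 := by
        simpa [Finset.card_eq_zero] using hs
      simp [zero_pow hcard]
    · simp
  have hmul : Real.exp (p / c) * Real.exp (-(p / c)) = 1 := by
    rw [← Real.exp_add]; simp
  have hfinal : F p ≤ f ∅ * Real.exp (-(p / c)) := by
    calc F p = F p * Real.exp (p / c) * Real.exp (-(p / c)) := by
          rw [mul_assoc, hmul, mul_one]
      _ ≤ f ∅ * Real.exp (-(p / c)) := by
          apply mul_le_mul_of_nonneg_right _ (Real.exp_pos _).le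
          calc F p * Real.exp (p / c) ≤ F 0 * Real.exp (0 / c) := hanti
            _ = f ∅ := by rw [hF0]; simp
  exact hfinal


-- the coordinate-kill submodule
noncomputable def cdKill {n : ℕ} (s : Finset (Fin n)) : Submodule ℝ (EuclideanSpace ℝ (Fin n)) :=
  ⨅ i ∈ s, LinearMap.ker (EuclideanSpace.projₗ i)

lemma mem_cdKill {n : ℕ} (s : Finset (Fin n)) (x : EuclideanSpace ℝ (Fin n)) :
    x ∈ cdKill s ↔ ∀ i ∈ s, x i = 0 := by
  simp [cdKill, Submodule.mem_iInf]

-- trace formula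
lemma sum_proj_single_sq {n : ℕ} (N : Submodule ℝ (EuclideanSpace ℝ (Fin n))) :
    ∑ i : Fin n,
      ‖(Submodule.orthogonalProjectionOnto N (EuclideanSpace.single i 1) : EuclideanSpace ℝ (Fin n))‖ ^ 2
      = (Module.finrank ℝ N : ℝ) := by
  classical
  let b := stdOrthonormalBasis ℝ N
  have hON : Orthonormal ℝ (fun j => ((b j : N) : EuclideanSpace ℝ (Fin n))) := by
    constructor
    · intro j
      rw [show ‖((b j : N) : EuclideanSpace ℝ (Fin n))‖ = ‖b j‖ from rfl]
      exact b.orthonormal.1 j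
    · intro j k hjk
      exact b.orthonormal.2 hjk
  have hnormsq : ∀ x : EuclideanSpace ℝ (Fin n), ∑ i, (x i) ^ 2 = ‖x‖ ^ 2 := by
    intro x
    rw [EuclideanSpace.norm_eq, Real.sq_sqrt (by positivity)]
    apply Finset.sum_congr rfl
    intro i _
    rw [Real.norm_eq_abs, sq_abs]
  have hproj : ∀ i : Fin n,
      ((Submodule.orthogonalProjectionOnto N (EuclideanSpace.single i 1)) : EuclideanSpace ℝ (Fin n))
        = ∑ j, ((b j : EuclideanSpace ℝ (Fin n)) i) • ((b j : N) : EuclideanSpace ℝ (Fin n)) := by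
    intro i
    rw [b.orthogonalProjectionOnto_apply_eq_sum]
    rw [Submodule.coe_sum]
    apply Finset.sum_congr rfl
    intro j _
    rw [SetLike.val_smul]
    congr 1
    rw [EuclideanSpace.inner_single_right]
    simp
  have hterm : ∀ i : Fin n,
      ‖(Submodule.orthogonalProjectionOnto N (EuclideanSpace.single i 1) : EuclideanSpace ℝ (Fin n))‖ ^ 2
        = ∑ j, ((b j : EuclideanSpace ℝ (Fin n)) i) ^ 2 := by
    intro i
    rw [← real_inner_self_eq_norm_sq]
    rw [hproj i]
    rw [hON.inner_sum]
    simp [sq]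
  rw [Finset.sum_congr rfl (fun i _ => hterm i)]
  rw [Finset.sum_comm]
  have : ∀ j, ∑ i : Fin n, ((b j : EuclideanSpace ℝ (Fin n)) i) ^ 2 = 1 := by
    intro j
    rw [hnormsq, hON.1 j]
    norm_num
  rw [Finset.sum_congr rfl (fun j _ => this j)]
  simp

section ZPart
variable {n r : ℕ} (Z : Matrix (Fin n) (Fin r) ℝ)

noncomputable def LZ : (Fin r → ℝ) →ₗ[ℝ] EuclideanSpace ℝ (Fin n) :=
  ((WithLp.linearEquiv 2 ℝ (Fin n → ℝ)).symm.toLinearMap).comp Z.mulVecLin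

lemma LZ_apply (v : Fin r → ℝ) (i : Fin n) : (LZ Z v) i = Z.mulVec v i := rfl

lemma range_LZ : LinearMap.range (LZ Z) = colSpace Z := by
  rw [LZ, LinearMap.range_comp, Matrix.range_mulVecLin, Submodule.map_span, colSpace]
  congr 1
  rw [← Set.range_comp]
  rfl

lemma ker_LZ (hZ : Z.rank = r) : LinearMap.ker (LZ Z) = ⊥ := by
  have h1 : LinearMap.ker (LZ Z) = LinearMap.ker Z.mulVecLin := by
    rw [LZ, LinearMap.ker_comp, LinearEquiv.ker, Submodule.comap_bot]
  rw [h1]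
  have h2 := LinearMap.finrank_range_add_finrank_ker Z.mulVecLin
  rw [show Module.finrank ℝ (LinearMap.range Z.mulVecLin) = Z.rank from rfl] at h2
  rw [hZ] at h2
  have h3 : Module.finrank ℝ (Fin r → ℝ) = r := by simp
  rw [h3] at h2
  have h4 : Module.finrank ℝ (LinearMap.ker Z.mulVecLin) = 0 := by omega
  exact Submodule.finrank_eq_zero.mp h4

lemma LZ_injective (hZ : Z.rank = r) : Function.Injective (LZ Z) :=
  LinearMap.ker_eq_bot.mp (ker_LZ Z hZ)

noncomputable def KK (s : Finset (Fin n)) : Submodule ℝ (Fin r → ℝ) :=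
  Submodule.comap (LZ Z) (cdKill s)

lemma map_KK (s : Finset (Fin n)) :
    Submodule.map (LZ Z) (KK Z s) = colSpace Z ⊓ cdKill s := by
  rw [KK, Submodule.map_comap_eq, range_LZ]

lemma finrank_KK (hZ : Z.rank = r) (s : Finset (Fin n)) :
    Module.finrank ℝ (KK Z s) = Module.finrank ℝ (colSpace Z ⊓ cdKill s : Submodule ℝ _) := by
  rw [← map_KK]
  exact (Submodule.equivMapOfInjective _ (LZ_injective Z hZ) (KK Z s)).finrank_eq

lemma finrank_colSpace (hZ : Z.rank = r) : Module.finrank ℝ (colSpace Z) = r := by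
  rw [← range_LZ]
  rw [LinearMap.finrank_range_of_inj (LZ_injective Z hZ)]
  simp

lemma KK_empty : KK Z (∅ : Finset (Fin n)) = ⊤ := by
  rw [KK]
  have : cdKill (∅ : Finset (Fin n)) = ⊤ := by
    rw [eq_top_iff]
    intro x _
    rw [mem_cdKill]
    intro i hi
    simp at hi
  rw [this, Submodule.comap_top]

end ZPart

lemma mem_orthogonal_span {E : Type*} [NormedAddCommGroup E] [InnerProductSpace ℝ E]
    (T : Set E) (w : E) :
    w ∈ (Submodule.span ℝ T)ᗮ ↔ ∀ u ∈ T, inner (𝕜 := ℝ) u w = 0 := by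
  constructor
  · intro hw u hu
    exact (Submodule.mem_orthogonal _ w).mp hw u (Submodule.subset_span hu)
  · intro h
    rw [Submodule.mem_orthogonal]
    intro u hu
    induction hu using Submodule.span_induction with
    | mem x hx => exact h x hx
    | zero => simp
    | add x y _ _ hx hy => rw [inner_add_left, hx, hy]; ring
    | smul a x _ hx => rw [real_inner_smul_left, hx]; ring

section Span
variable {n r : ℕ} (Z : Matrix (Fin n) (Fin r) ℝ)

lemma span_iff_KK (s : Finset (Fin n)) :
    Submodule.span ℝ ((fun i => Z i) '' {i : Fin n | i ∈ s}) = ⊤ ↔ KK Z s = ⊥ := by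
  classical
  set e : (Fin r → ℝ) ≃ₗ[ℝ] EuclideanSpace ℝ (Fin r) :=
    (WithLp.linearEquiv 2 ℝ (Fin r → ℝ)).symm with he
  have key : ∀ v : Fin r → ℝ,
      (v ∈ KK Z s ↔ e v ∈ (Submodule.span ℝ (e '' ((fun i => Z i) '' {i : Fin n | i ∈ s})))ᗮ) := by
    intro v
    rw [mem_orthogonal_span]
    constructor
    · intro hv u hu
      obtain ⟨u', ⟨i, hi, rfl⟩, rfl⟩ := hu
      have h1 : (LZ Z v) i = 0 := by
        rw [KK, Submodule.mem_comap, mem_cdKill] at hv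
        exact hv i hi
      rw [LZ_apply] at h1
      have : inner (𝕜 := ℝ) (e (Z i)) (e v) = ∑ ℓ, Z i ℓ * v ℓ := by
        simp [he, PiLp.inner_apply, RCLike.inner_apply, mul_comm]
      rw [this]
      simpa [Matrix.mulVec, dotProduct] using h1
    · intro h
      rw [KK, Submodule.mem_comap, mem_cdKill]
      intro i hi
      have h1 := h (e (Z i)) ⟨Z i, ⟨i, hi, rfl⟩, rfl⟩
      have : inner (𝕜 := ℝ) (e (Z i)) (e v) = ∑ ℓ, Z i ℓ * v ℓ := by
        simp [he, PiLp.inner_apply, RCLike.inner_apply, mul_comm]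
      rw [this] at h1
      rw [LZ_apply]
      simpa [Matrix.mulVec, dotProduct] using h1
  constructor
  · intro hspan
    rw [eq_bot_iff]
    intro v hv
    have h2 : Submodule.span ℝ (e '' ((fun i => Z i) '' {i : Fin n | i ∈ s})) = ⊤ := by
      refine (Submodule.map_span (e : (Fin r → ℝ) →ₗ[ℝ] EuclideanSpace ℝ (Fin r)) _).symm.trans ?_
      rw [hspan, Submodule.map_top]
      exact LinearMap.range_eq_top.mpr e.surjective
    have h3 := (key v).mp hv
    rw [h2] at h3
    have h4 : e v = 0 := by
      simpa [Submodule.top_orthogonal_eq_bot] using h3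
    have : v = 0 := by
      apply e.injective
      simpa using h4
    simp [this]
  · intro hKK
    have h2 : (Submodule.span ℝ (e '' ((fun i => Z i) '' {i : Fin n | i ∈ s})))ᗮ = ⊥ := by
      rw [eq_bot_iff]
      intro w hw
      obtain ⟨v, rfl⟩ := e.surjective w
      have := (key v).mpr hw
      rw [hKK] at this
      simp at this
      simp [this]
    have h3 := Submodule.orthogonal_eq_bot_iff.mp h2
    have h4 : Submodule.map (e : (Fin r → ℝ) →ₗ[ℝ] EuclideanSpace ℝ (Fin r))
        (Submodule.span ℝ ((fun i => Z i) '' {i : Fin n | i ∈ s})) = ⊤ := by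
      rw [Submodule.map_span]
      exact h3
    apply Submodule.map_injective_of_injective
      (f := (e : (Fin r → ℝ) →ₗ[ℝ] EuclideanSpace ℝ (Fin r))) e.injective
    rw [h4, Submodule.map_top]
    exact (LinearMap.range_eq_top.mpr e.surjective).symm

end Span

section Key
variable {n : ℕ}

lemma proj_single_eq_zero_iff (N : Submodule ℝ (EuclideanSpace ℝ (Fin n))) (i : Fin n) :
    Submodule.orthogonalProjectionOnto N (EuclideanSpace.single i 1) = 0 ↔ ∀ x ∈ N, x i = 0 := by
  rw [Submodule.orthogonalProjectionOnto_eq_zero_iff, Submodule.mem_orthogonal]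
  constructor
  · intro h x hx
    have h1 := h x hx
    rwa [EuclideanSpace.inner_single_right, conj_trivial, one_mul] at h1
  · intro h x hx
    rw [EuclideanSpace.inner_single_right, conj_trivial, one_mul]
    exact h x hx

lemma proj_norm_le_of_le {N W : Submodule ℝ (EuclideanSpace ℝ (Fin n))} (h : N ≤ W)
    (x : EuclideanSpace ℝ (Fin n)) :
    ‖(Submodule.orthogonalProjectionOnto N x : EuclideanSpace ℝ (Fin n))‖
      ≤ ‖(Submodule.orthogonalProjectionOnto W x : EuclideanSpace ℝ (Fin n))‖ := by
  rw [← Submodule.orthogonalProjectionOnto_starProjection_of_le h x]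
  calc ‖(Submodule.orthogonalProjectionOnto N (Submodule.orthogonalProjectionOnto W x : EuclideanSpace ℝ (Fin n))
        : EuclideanSpace ℝ (Fin n))‖
      = ‖Submodule.orthogonalProjectionOnto N (Submodule.orthogonalProjectionOnto W x : EuclideanSpace ℝ (Fin n))‖ := rfl
    _ ≤ ‖Submodule.orthogonalProjectionOnto N‖ * ‖(Submodule.orthogonalProjectionOnto W x : EuclideanSpace ℝ (Fin n))‖ :=
        (Submodule.orthogonalProjectionOnto N).le_opNorm _
    _ ≤ 1 * ‖(Submodule.orthogonalProjectionOnto W x : EuclideanSpace ℝ (Fin n))‖ :=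
        mul_le_mul_of_nonneg_right (Submodule.orthogonalProjectionOnto_norm_le N) (norm_nonneg _)
    _ = _ := one_mul _

lemma key_ineq (W : Submodule ℝ (EuclideanSpace ℝ (Fin n))) {κ : ℝ} (hκpos : 0 < κ)
    (hκ : ∀ i, ‖(Submodule.orthogonalProjectionOnto W (EuclideanSpace.single i 1) :
        EuclideanSpace ℝ (Fin n))‖ ^ 2 ≤ κ)
    (s : Finset (Fin n)) :
    (Module.finrank ℝ (W ⊓ cdKill s : Submodule ℝ _) : ℝ) / κ ≤
      ∑ i ∈ sᶜ, ((Module.finrank ℝ (W ⊓ cdKill s : Submodule ℝ _) : ℝ)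
        - (Module.finrank ℝ (W ⊓ cdKill (insert i s) : Submodule ℝ _) : ℝ)) := by
  classical
  set N : Submodule ℝ (EuclideanSpace ℝ (Fin n)) := W ⊓ cdKill s with hN
  have hNW : N ≤ W := inf_le_left
  have hNins : ∀ i : Fin n,
      W ⊓ cdKill (insert i s) = N ⊓ LinearMap.ker (EuclideanSpace.projₗ i) := by
    intro i
    ext x
    simp only [Submodule.mem_inf, mem_cdKill, Finset.mem_insert, hN, LinearMap.mem_ker]
    constructor
    · rintro ⟨hw, hk⟩
      exact ⟨⟨hw, fun j hj => hk j (Or.inr hj)⟩, hk i (Or.inl rfl)⟩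
    · rintro ⟨⟨hw, hk⟩, hi⟩
      refine ⟨hw, fun j hj => ?_⟩
      rcases hj with rfl | hj
      · exact hi
      · exact hk j hj
  have trace := sum_proj_single_sq N
  have hzero : ∀ i ∈ s,
      ‖(Submodule.orthogonalProjectionOnto N (EuclideanSpace.single i 1) : EuclideanSpace ℝ (Fin n))‖ ^ 2
        = 0 := by
    intro i hi
    have : Submodule.orthogonalProjectionOnto N (EuclideanSpace.single i 1) = 0 := by
      rw [proj_single_eq_zero_iff]
      intro x hx
      rw [hN, Submodule.mem_inf, mem_cdKill] at hx
      exact hx.2 i hi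
    rw [this]
    simp
  have tr2 : ∑ i ∈ sᶜ,
      ‖(Submodule.orthogonalProjectionOnto N (EuclideanSpace.single i 1) : EuclideanSpace ℝ (Fin n))‖ ^ 2
        = (Module.finrank ℝ N : ℝ) := by
    rw [← Finset.sum_add_sum_compl s] at trace
    rw [Finset.sum_eq_zero hzero, zero_add] at trace
    exact trace
  have drop : ∀ i ∈ sᶜ,
      ‖(Submodule.orthogonalProjectionOnto N (EuclideanSpace.single i 1) : EuclideanSpace ℝ (Fin n))‖ ^ 2 / κ
        ≤ (Module.finrank ℝ N : ℝ)
          - (Module.finrank ℝ (W ⊓ cdKill (insert i s) : Submodule ℝ _) : ℝ) := by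
    intro i _
    rw [hNins i]
    by_cases hz : Submodule.orthogonalProjectionOnto N (EuclideanSpace.single i 1) = 0
    · have hNker : N ⊓ LinearMap.ker (EuclideanSpace.projₗ i) = N := by
        rw [inf_eq_left]
        intro x hx
        rw [LinearMap.mem_ker]
        exact (proj_single_eq_zero_iff N i).mp hz x hx
      rw [hNker, hz]
      simp
    · have hex : ∃ x ∈ N, x i ≠ 0 := by
        by_contra hcon
        push_neg at hcon
        exact hz ((proj_single_eq_zero_iff N i).mpr hcon)
      obtain ⟨x, hxN, hxi⟩ := hex
      have hlt : N ⊓ LinearMap.ker (EuclideanSpace.projₗ i) < N := by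
        refine lt_of_le_of_ne inf_le_left (fun heq => hxi ?_)
        have : x ∈ N ⊓ LinearMap.ker (EuclideanSpace.projₗ i) := heq.symm ▸ hxN
        exact this.2
      have hfr := Submodule.finrank_lt_finrank_of_lt hlt
      have hcast : (Module.finrank ℝ (N ⊓ LinearMap.ker (EuclideanSpace.projₗ i)
          : Submodule ℝ _) : ℝ) + 1 ≤ (Module.finrank ℝ N : ℝ) := by
        exact_mod_cast hfr
      have hle1 : ‖(Submodule.orthogonalProjectionOnto N (EuclideanSpace.single i 1) :
          EuclideanSpace ℝ (Fin n))‖ ^ 2 / κ ≤ 1 := by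
        rw [div_le_one hκpos]
        calc ‖(Submodule.orthogonalProjectionOnto N (EuclideanSpace.single i 1) :
              EuclideanSpace ℝ (Fin n))‖ ^ 2
            ≤ ‖(Submodule.orthogonalProjectionOnto W (EuclideanSpace.single i 1) :
              EuclideanSpace ℝ (Fin n))‖ ^ 2 := by
              apply pow_le_pow_left₀ (norm_nonneg _) (proj_norm_le_of_le hNW _)
          _ ≤ κ := hκ i
      linarith
  calc (Module.finrank ℝ N : ℝ) / κ
      = ∑ i ∈ sᶜ, ‖(Submodule.orthogonalProjectionOnto N (EuclideanSpace.single i 1) :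
          EuclideanSpace ℝ (Fin n))‖ ^ 2 / κ := by
        rw [← Finset.sum_div, tr2]
    _ ≤ _ := Finset.sum_le_sum drop

end Key

section Kappa
variable {n r : ℕ} (Z : Matrix (Fin n) (Fin r) ℝ)

noncomputable def kap : ℝ :=
  ⨆ i : Fin n, ‖(Submodule.orthogonalProjection (colSpace Z) (EuclideanSpace.single i 1) :
      EuclideanSpace ℝ (Fin n))‖ ^ 2

lemma le_kap (hn : 0 < n) (i : Fin n) :
    ‖(Submodule.orthogonalProjection (colSpace Z) (EuclideanSpace.single i 1) :
      EuclideanSpace ℝ (Fin n))‖ ^ 2 ≤ kap Z := by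
  haveI : Nonempty (Fin n) := ⟨⟨0, hn⟩⟩
  exact le_ciSup (f := fun i : Fin n =>
    ‖(Submodule.orthogonalProjection (colSpace Z) (EuclideanSpace.single i 1) :
      EuclideanSpace ℝ (Fin n))‖ ^ 2) (Set.Finite.bddAbove (Set.finite_range _)) i

lemma kap_pos (hZ : Z.rank = r) (hr : 0 < r) (hn : 0 < n) : 0 < kap Z := by
  rcases lt_or_ge 0 (kap Z) with h | h
  · exact h
  exfalso
  have hz : ∀ i : Fin n, Submodule.orthogonalProjectionOnto (colSpace Z) (EuclideanSpace.single i 1) = 0 := by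
    intro i
    have h1 : ‖(Submodule.orthogonalProjection (colSpace Z) (EuclideanSpace.single i 1) :
        EuclideanSpace ℝ (Fin n))‖ ^ 2 = 0 := le_antisymm ((le_kap Z hn i).trans h) (by positivity)
    have h2 : (Submodule.orthogonalProjection (colSpace Z) (EuclideanSpace.single i 1) :
        EuclideanSpace ℝ (Fin n)) = 0 := by
      rwa [pow_eq_zero_iff (two_ne_zero), norm_eq_zero] at h1
    exact_mod_cast Submodule.coe_eq_zero.mp h2
  have hbot : colSpace Z = ⊥ := by
    rw [eq_bot_iff]
    intro x hx
    have hxz : ∀ i, x i = 0 := fun i => (proj_single_eq_zero_iff _ i).mp (hz i) x hx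
    have : x = 0 := by
      ext i
      exact hxz i
    simp [this]
  have := finrank_colSpace Z hZ
  rw [hbot] at this
  simp at this
  omega

end Kappa
section MainReal
variable {n r : ℕ} (Z : Matrix (Fin n) (Fin r) ℝ)

lemma main_real (hZ : Z.rank = r) (hr : 0 < r) {p δ : ℝ}
    (hp0 : 0 ≤ p) (hp1 : p ≤ 1) (hδ0 : 0 < δ) (hδ1 : δ < 1)
    (hpk : kap Z * Real.log (r / δ) ≤ p) :
    ∑ s : Finset (Fin n), p ^ s.card * (1 - p) ^ sᶜ.card
        * (Module.finrank ℝ (KK Z s) : ℝ) ≤ δ := by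
  have hn : 0 < n := by
    have h := Matrix.rank_le_card_height Z
    rw [hZ] at h
    simp only [Fintype.card_fin] at h
    omega
  have hκ := kap_pos Z hZ hr hn
  have hkey : ∀ s : Finset (Fin n),
      (Module.finrank ℝ (KK Z s) : ℝ) / kap Z
        ≤ ∑ i ∈ sᶜ, ((Module.finrank ℝ (KK Z s) : ℝ)
            - (Module.finrank ℝ (KK Z (insert i s)) : ℝ)) := by
    intro s
    have h1 := key_ineq (colSpace Z) hκ (le_kap Z hn) s
    simp_rw [← finrank_KK Z hZ] at h1
    exact h1
  have hmain := russo_gronwall (fun s => (Module.finrank ℝ (KK Z s) : ℝ))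
      (fun s => by positivity) hκ hkey hp0 hp1
  have hempty : (Module.finrank ℝ (KK Z (∅ : Finset (Fin n))) : ℝ) = r := by
    rw [KK_empty]
    rw [finrank_top]
    simp
  rw [hempty] at hmain
  have hrρ : (1:ℝ) ≤ (r:ℝ) := by exact_mod_cast hr
  have h2 : Real.log ((r:ℝ)/δ) ≤ p / kap Z := (le_div_iff₀' hκ).mpr hpk
  have h3 : Real.exp (-(p / kap Z)) ≤ δ / r := by
    calc Real.exp (-(p / kap Z)) ≤ Real.exp (-(Real.log ((r:ℝ)/δ))) :=
          Real.exp_le_exp.mpr (neg_le_neg h2)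
      _ = δ / r := by
          rw [← Real.log_inv, Real.exp_log (by positivity), inv_div]
  calc ∑ s : Finset (Fin n), p ^ s.card * (1 - p) ^ sᶜ.card
        * (Module.finrank ℝ (KK Z s) : ℝ)
      ≤ (r : ℝ) * Real.exp (-(p / kap Z)) := hmain
    _ ≤ (r : ℝ) * (δ / r) := mul_le_mul_of_nonneg_left h3 (by positivity)
    _ = δ := by field_simp

end MainReal


/-- If `Z ∈ ℝ^{n×r}` has rank `r`, `δ ∈ (0,1)`, `p ≥ μ(Z)·r·log(r/δ)/n`, and `Z̃` keeps each
row of `Z` independently with probability `p`, then `rank(Z̃) = r` with probability `≥ 1 − δ`. -/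
theorem random_row_submatrix_full_rank_of_p_large {n r : ℕ} (Z : Matrix (Fin n) (Fin r) ℝ)
    (hZ : Z.rank = r) (δ : ℝ) (hδ0 : 0 < δ) (hδ1 : δ < 1)
    (p : ℝ) (hp0 : 0 ≤ p) (hp1 : p ≤ 1)
    (hp : coherence Z * r * Real.log (r / δ) / n ≤ p)
    {Ω : Type*} [MeasurableSpace Ω] (P : Measure Ω) [IsProbabilityMeasure P]
    (ξ : Fin n → Ω → Bool)
    (hmeas : ∀ i, Measurable (ξ i))
    (hindep : iIndepFun ξ P)
    (hbern : ∀ i, P {ω | ξ i ω = true} = ENNReal.ofReal p) :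
    ENNReal.ofReal (1 - δ) ≤
      P {ω | Submodule.span ℝ ((fun i => Z i) '' {i | ξ i ω = true}) = ⊤} := by
  classical
  rcases Nat.eq_zero_or_pos r with hr0 | hr
  · -- r = 0 : the span is always everything
    subst hr0
    have hall : {ω | Submodule.span ℝ ((fun i => Z i) '' {i | ξ i ω = true}) = ⊤} = Set.univ := by
      ext ω
      simp only [Set.mem_setOf_eq, Set.mem_univ, iff_true]
      rw [eq_top_iff]
      intro x _
      have hx0 : x = 0 := funext fun i => i.elim0
      rw [hx0]
      exact Submodule.zero_mem _
    rw [hall, measure_univ]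
    calc ENNReal.ofReal (1 - δ) ≤ ENNReal.ofReal 1 := ENNReal.ofReal_le_ofReal (by linarith)
      _ = 1 := ENNReal.ofReal_one
  -- main case r ≥ 1
  have hn : 0 < n := by
    have h := Matrix.rank_le_card_height Z
    rw [hZ] at h
    simp only [Fintype.card_fin] at h
    omega
  -- coherence arithmetic
  have hcoh : coherence Z = ((n : ℝ) / r) * kap Z := by
    rw [coherence, kap]
    simp
  have hpk : kap Z * Real.log ((r : ℝ) / δ) ≤ p := by
    have hne : (n : ℝ) ≠ 0 := by positivity
    have hre : (r : ℝ) ≠ 0 := by positivity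
    have : coherence Z * r * Real.log ((r : ℝ) / δ) / n = kap Z * Real.log ((r : ℝ) / δ) := by
      rw [hcoh]
      field_simp
    rwa [this] at hp
  -- atoms
  set A : (Fin n → Bool) → Set Ω := fun b => ⋂ i, ξ i ⁻¹' {b i} with hA
  have hAmeas : ∀ b, MeasurableSet (A b) :=
    fun b => MeasurableSet.iInter (fun i => (hmeas i) (measurableSet_singleton _))
  have hAprob : ∀ b, P (A b)
      = ∏ i, (if b i then ENNReal.ofReal p else ENNReal.ofReal (1 - p)) := by
    intro b
    rw [hA]
    rw [hindep.meas_iInter (fun i => ⟨{b i}, measurableSet_singleton _, rfl⟩)]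
    apply Finset.prod_congr rfl
    intro i _
    have hsetT : ξ i ⁻¹' {true} = {ω | ξ i ω = true} := by ext ω; simp
    cases hbi : b i
    · have hsetF : ξ i ⁻¹' {false} = {ω | ξ i ω = true}ᶜ := by
        ext ω; cases h : ξ i ω <;> simp [h]
      rw [hsetF, measure_compl (by rw [← hsetT]; exact (hmeas i) (measurableSet_singleton _))
        (measure_ne_top _ _), hbern i]
      simp only [measure_univ]
      rw [show (1 : ENNReal) = ENNReal.ofReal 1 from ENNReal.ofReal_one.symm,
        ← ENNReal.ofReal_sub 1 hp0]
      simp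
    · rw [hsetT, hbern i]
      simp
  -- the good event as a union of atoms
  have hT : {ω | Submodule.span ℝ ((fun i => Z i) '' {i | ξ i ω = true}) = ⊤}
      = ⋃ b ∈ Finset.univ.filter
          (fun b : Fin n → Bool =>
            Submodule.span ℝ ((fun i => Z i) '' {i | b i = true}) = ⊤), A b := by
    ext ω
    simp only [Set.mem_setOf_eq, Set.mem_iUnion, Finset.mem_filter, Finset.mem_univ, true_and,
      hA, Set.mem_iInter, Set.mem_preimage, Set.mem_singleton_iff]
    constructor
    · intro h
      exact ⟨fun i => ξ i ω, h, fun i => rfl⟩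
    · rintro ⟨b, hb, hωb⟩
      have hfb : (fun i => ξ i ω) = b := funext hωb
      rw [show {i | ξ i ω = true} = {i | b i = true} by rw [← hfb]]
      exact hb
  have hdisj : Set.PairwiseDisjoint
      (↑(Finset.univ.filter
      (fun b : Fin n → Bool =>
        Submodule.span ℝ ((fun i => Z i) '' {i | b i = true}) = ⊤)) : Set (Fin n → Bool)) A := by
    intro b _ b' _ hbb'
    apply Set.disjoint_left.mpr
    intro ω hω hω'
    apply hbb'
    funext i
    have h1 : ξ i ω = b i := by
      have := Set.mem_iInter.mp hω i; simpa using this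
    have h2 : ξ i ω = b' i := by
      have := Set.mem_iInter.mp hω' i; simpa using this
    rw [← h1, h2]
  rw [hT, measure_biUnion_finset hdisj (fun b _ => hAmeas b)]
  -- total probability is 1
  have htot : ∑ b : Fin n → Bool,
      (∏ i, (if b i then ENNReal.ofReal p else ENNReal.ofReal (1 - p))) = 1 := by
    rw [show (∑ b : Fin n → Bool,
        (∏ i, (if b i then ENNReal.ofReal p else ENNReal.ofReal (1 - p))))
        = ∑ b ∈ Fintype.piFinset (fun _ : Fin n => (Finset.univ : Finset Bool)),
          (∏ i, (if b i then ENNReal.ofReal p else ENNReal.ofReal (1 - p))) by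
      rw [Fintype.piFinset_univ]]
    rw [← Finset.prod_univ_sum (fun _ : Fin n => (Finset.univ : Finset Bool))
      (fun _ x => if x then ENNReal.ofReal p else ENNReal.ofReal (1 - p))]
    have : ∀ i : Fin n, ∑ x : Bool,
        (if x then ENNReal.ofReal p else ENNReal.ofReal (1 - p)) = 1 := by
      intro i
      rw [Fintype.sum_bool]
      have h1 : ENNReal.ofReal p + ENNReal.ofReal (1 - p) = 1 := by
        rw [← ENNReal.ofReal_add hp0 (by linarith), ← ENNReal.ofReal_one]
        congr 1
        ring
      simpa using h1
    rw [Finset.prod_congr rfl (fun i _ => this i)]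
    simp
  -- split into good and bad
  have hsplit : ∑ b ∈ Finset.univ.filter (fun b : Fin n → Bool =>
        Submodule.span ℝ ((fun i => Z i) '' {i | b i = true}) = ⊤), P (A b)
      + ∑ b ∈ Finset.univ.filter (fun b : Fin n → Bool =>
        ¬ (Submodule.span ℝ ((fun i => Z i) '' {i | b i = true}) = ⊤)), P (A b) = 1 := by
    rw [Finset.sum_filter_add_sum_filter_not]
    calc ∑ b : Fin n → Bool, P (A b)
        = ∑ b : Fin n → Bool,
            (∏ i, (if b i then ENNReal.ofReal p else ENNReal.ofReal (1 - p))) :=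
          Finset.sum_congr rfl (fun b _ => hAprob b)
      _ = 1 := htot
  -- nonnegativity of real weights
  have hw0 : ∀ b : Fin n → Bool, 0 ≤ ∏ i, (if b i then p else (1 - p)) :=
    fun b => Finset.prod_nonneg (fun i _ => by by_cases h : b i <;> simp [h] <;> linarith)
  have hAof : ∀ b, P (A b) = ENNReal.ofReal (∏ i, if b i then p else (1 - p)) := by
    intro b
    rw [hAprob b, ENNReal.ofReal_prod_of_nonneg
      (fun i _ => by by_cases h : b i <;> simp [h] <;> linarith)]
    apply Finset.prod_congr rfl
    intro i _
    by_cases h : b i <;> simp [h]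
  -- the bad mass is at most δ
  have hbad : ∑ b ∈ Finset.univ.filter (fun b : Fin n → Bool =>
      ¬ (Submodule.span ℝ ((fun i => Z i) '' {i | b i = true}) = ⊤)), P (A b)
      ≤ ENNReal.ofReal δ := by
    simp_rw [hAof]
    rw [← ENNReal.ofReal_sum_of_nonneg (fun b _ => hw0 b)]
    apply ENNReal.ofReal_le_ofReal
    -- pure real inequality
    have hbad1 : ∀ b : Fin n → Bool,
        ¬ (Submodule.span ℝ ((fun i => Z i) '' {i | b i = true}) = ⊤) →
          (1:ℝ) ≤ (Module.finrank ℝ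
            (KK Z (Finset.univ.filter (fun i => b i = true))) : ℝ) := by
      intro b hb
      have hKne : KK Z (Finset.univ.filter (fun i => b i = true)) ≠ ⊥ := by
        intro hbot
        apply hb
        have h2 := (span_iff_KK Z (Finset.univ.filter (fun i => b i = true))).mpr hbot
        have h3 : {i : Fin n | i ∈ Finset.univ.filter (fun i => b i = true)}
            = {i | b i = true} := by
          ext i; simp
        rwa [h3] at h2
      have hne0 : Module.finrank ℝ (KK Z (Finset.univ.filter (fun i => b i = true))) ≠ 0 :=
        fun h0 => hKne (Submodule.finrank_eq_zero.mp h0)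
      exact_mod_cast Nat.one_le_iff_ne_zero.mpr hne0
    have hwb : ∀ b : Fin n → Bool, (∏ i, (if b i then p else (1 - p)))
        = p ^ (Finset.univ.filter (fun i => b i = true)).card
          * (1 - p) ^ ((Finset.univ.filter (fun i => b i = true))ᶜ).card := by
      intro b
      rw [Finset.prod_ite (fun _ => p) (fun _ => (1 - p)), Finset.prod_const, Finset.prod_const]
      congr 2
      rw [Finset.compl_filter]
    have hbij : Function.Bijective
        (fun b : Fin n → Bool => Finset.univ.filter (fun i => b i = true)) := by
      constructor
      · intro b b' hbb'
        funext i
        have h := Finset.ext_iff.mp hbb' i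
        simp only [Finset.mem_filter, Finset.mem_univ, true_and] at h
        cases hx : b i <;> cases hy : b' i <;> simp_all
      · intro s
        refine ⟨fun i => decide (i ∈ s), ?_⟩
        ext i; simp
    calc ∑ b ∈ Finset.univ.filter (fun b : Fin n → Bool =>
          ¬ (Submodule.span ℝ ((fun i => Z i) '' {i | b i = true}) = ⊤)),
            (∏ i, (if b i then p else (1 - p)))
        ≤ ∑ b ∈ Finset.univ.filter (fun b : Fin n → Bool =>
          ¬ (Submodule.span ℝ ((fun i => Z i) '' {i | b i = true}) = ⊤)),
            (∏ i, (if b i then p else (1 - p)))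
              * (Module.finrank ℝ (KK Z (Finset.univ.filter (fun i => b i = true))) : ℝ) := by
          apply Finset.sum_le_sum
          intro b hb
          exact le_mul_of_one_le_right (hw0 b)
            (hbad1 b (by simpa using (Finset.mem_filter.mp hb).2))
      _ ≤ ∑ b : Fin n → Bool, (∏ i, (if b i then p else (1 - p)))
              * (Module.finrank ℝ (KK Z (Finset.univ.filter (fun i => b i = true))) : ℝ) :=
          Finset.sum_le_sum_of_subset_of_nonneg (Finset.filter_subset _ _)
            (fun b _ _ => mul_nonneg (hw0 b) (by positivity))
      _ = ∑ s : Finset (Fin n), p ^ s.card * (1 - p) ^ sᶜ.card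
              * (Module.finrank ℝ (KK Z s) : ℝ) := by
          apply Fintype.sum_bijective _ hbij
          intro b
          rw [hwb b]
      _ ≤ δ := main_real Z hZ hr hp0 hp1 hδ0 hδ1 hpk
  -- conclude
  have hfin : ∑ b ∈ Finset.univ.filter (fun b : Fin n → Bool =>
      ¬ (Submodule.span ℝ ((fun i => Z i) '' {i | b i = true}) = ⊤)), P (A b) ≠ ⊤ :=
    (lt_of_le_of_lt hbad ENNReal.ofReal_lt_top).ne
  have hgood := ENNReal.eq_sub_of_add_eq hfin hsplit
  rw [hgood]
  calc ENNReal.ofReal (1 - δ) = ENNReal.ofReal 1 - ENNReal.ofReal δ :=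
        ENNReal.ofReal_sub 1 hδ0.le
    _ = 1 - ENNReal.ofReal δ := by rw [ENNReal.ofReal_one]
    _ ≤ 1 - ∑ b ∈ Finset.univ.filter (fun b : Fin n → Bool =>
          ¬ (Submodule.span ℝ ((fun i => Z i) '' {i | b i = true}) = ⊤)), P (A b) :=
        tsub_le_tsub_left hbad 1
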